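/- For u ∈ C¹[0,T] with u' Lipschitz with constant L, the piecewise-constant midpoint approximation of the Caputo derivative of order a at t = nh has error bounded by (L h / 2) · (nh)^{1-a} / Γ(2-a). -/
import Mathlib


open Real MeasureTheory intervalIntegral Finset

theorem caputo_midpoint_error_bound (a h L T : ℝ) (ha : a ∈ Set.Ioo (0:ℝ) 1)
    (hh : 0 < h) (hL : 0 ≤ L) (n : ℕ) (hn : 1 ≤ n) (hnT : (n:ℝ) * h ≤ T)
    (u : ℝ → ℝ) (hu : ContDiffOn ℝ 1 u (Set.Icc 0 T))
    (hLip : ∀ x ∈ Set.Icc (0:ℝ) T, ∀ y ∈ Set.Icc (0:ℝ) T,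
      |deriv u x - deriv u y| ≤ L * |x - y|) :
    |(1 / Real.Gamma (1 - a)) *
        (∫ x in (0:ℝ)..((n:ℝ) * h), ((n:ℝ) * h - x) ^ (-a) * deriv u x) -
      ∑ r ∈ Finset.Icc 1 n,
        ((1 / Real.Gamma (1 - a)) *
            ∫ x in (((r:ℝ) - 1) * h)..((r:ℝ) * h), ((n:ℝ) * h - x) ^ (-a)) *
          ((deriv u (((r:ℝ) - 1) * h) + deriv u ((r:ℝ) * h)) / 2)| ≤
      L * h / 2 * ((n:ℝ) * h) ^ (1 - a) / Real.Gamma (2 - a) := by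
  obtain ⟨ha0, ha1⟩ := ha
  have hn' : (1:ℝ) ≤ (n:ℝ) := by exact_mod_cast hn
  set N : ℝ := (n:ℝ) * h with hNdef
  have hN0 : 0 < N := by
    have : (0:ℝ) < (n:ℝ) := by linarith
    exact mul_pos this hh
  have hΓpos : 0 < Real.Gamma (1 - a) := Real.Gamma_pos_of_pos (by linarith)
  have hΓ2 : Real.Gamma (2 - a) = (1 - a) * Real.Gamma (1 - a) := by
    have h2 : (2:ℝ) - a = (1 - a) + 1 := by ring
    rw [h2, Real.Gamma_add_one (by linarith : (0:ℝ) < 1 - a).ne']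
  set f : ℝ → ℝ := fun x => (N - x) ^ (-a) with hfdef
  -- integrability of f on any interval
  have hfint : ∀ b c : ℝ, IntervalIntegrable f volume b c := by
    intro b c
    have h1 : IntervalIntegrable (fun t : ℝ => t ^ (-a)) volume (N - b) (N - c) :=
      intervalIntegral.intervalIntegrable_rpow' (by linarith)
    have h2 := h1.comp_sub_left N
    simpa using h2
  -- continuity of deriv u on [0,T]
  have hdc : ContinuousOn (deriv u) (Set.Icc 0 T) := by
    refine LipschitzOnWith.continuousOn (K := L.toNNReal) ?_
    refine LipschitzOnWith.of_dist_le_mul ?_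
    intro x hx y hy
    rw [Real.dist_eq, Real.dist_eq]
    calc |deriv u x - deriv u y| ≤ L * |x - y| := hLip x hx y hy
      _ ≤ L.toNNReal * |x - y| := by gcongr; exact Real.le_coe_toNNReal L
  have hk1N : ∀ k : ℕ, k < n → ((k:ℝ)+1) * h ≤ N := by
    intro k hk
    have : ((k:ℝ)+1) ≤ (n:ℝ) := by exact_mod_cast hk
    rw [hNdef]
    nlinarith
  have hk0 : ∀ k : ℕ, (0:ℝ) ≤ (k:ℝ) * h := by
    intro k; positivity
  have hsubint : ∀ k : ℕ, k < n → Set.Icc ((k:ℝ)*h) (((k:ℝ)+1)*h) ⊆ Set.Icc (0:ℝ) T := by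
    intro k hk
    exact Set.Icc_subset_Icc (hk0 k) (le_trans (hk1N k hk) hnT)
  have hle : ∀ k : ℕ, (k:ℝ)*h ≤ ((k:ℝ)+1)*h := by
    intro k; nlinarith [hk0 k]
  -- integrability of products
  have hgint : ∀ k : ℕ, k < n →
      IntervalIntegrable (fun x => f x * deriv u x) volume ((k:ℝ)*h) (((k:ℝ)+1)*h) := by
    intro k hk
    refine (hfint _ _).mul_continuousOn (hdc.mono ?_)
    rw [Set.uIcc_of_le (hle k)]
    exact hsubint k hk
  -- splitting the big integral
  have hsplit : (∫ x in (0:ℝ)..N, f x * deriv u x)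
      = ∑ k ∈ Finset.range n, ∫ x in ((k:ℝ)*h)..(((k:ℝ)+1)*h), f x * deriv u x := by
    have := intervalIntegral.sum_integral_adjacent_intervals
      (a := fun k : ℕ => (k:ℝ)*h) (μ := volume)
      (f := fun x => f x * deriv u x) (n := n)
      (fun k hk => by push_cast; exact hgint k hk)
    simp only [Nat.cast_zero, zero_mul, Nat.cast_add, Nat.cast_one] at this
    rw [← hNdef] at this
    exact this.symm
  have hsplitf : (∫ x in (0:ℝ)..N, f x)
      = ∑ k ∈ Finset.range n, ∫ x in ((k:ℝ)*h)..(((k:ℝ)+1)*h), f x := by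
    have := intervalIntegral.sum_integral_adjacent_intervals
      (a := fun k : ℕ => (k:ℝ)*h) (μ := volume)
      (f := f) (n := n)
      (fun k hk => by push_cast; exact hfint _ _)
    simp only [Nat.cast_zero, zero_mul, Nat.cast_add, Nat.cast_one] at this
    rw [← hNdef] at this
    exact this.symm
  -- midpoint values
  set m : ℕ → ℝ := fun k => (deriv u ((k:ℝ)*h) + deriv u (((k:ℝ)+1)*h)) / 2 with hmdef
  -- per-interval error bound
  have hterm : ∀ k : ℕ, k < n →
      |∫ x in ((k:ℝ)*h)..(((k:ℝ)+1)*h), f x * (deriv u x - m k)|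
        ≤ (∫ x in ((k:ℝ)*h)..(((k:ℝ)+1)*h), f x) * (L*h/2) := by
    intro k hk
    have hsub := hsubint k hk
    have hlk := hle k
    have hi1 : IntervalIntegrable (fun x => f x * (deriv u x - m k)) volume ((k:ℝ)*h) (((k:ℝ)+1)*h) := by
      refine (hfint _ _).mul_continuousOn ((hdc.sub continuousOn_const).mono ?_)
      rw [Set.uIcc_of_le hlk]; exact hsub
    have hi2 : IntervalIntegrable (fun x => f x * (L*h/2)) volume ((k:ℝ)*h) (((k:ℝ)+1)*h) :=
      (hfint _ _).mul_const _
    calc |∫ x in ((k:ℝ)*h)..(((k:ℝ)+1)*h), f x * (deriv u x - m k)|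
        ≤ ∫ x in ((k:ℝ)*h)..(((k:ℝ)+1)*h), |f x * (deriv u x - m k)| :=
          intervalIntegral.abs_integral_le_integral_abs hlk
      _ ≤ ∫ x in ((k:ℝ)*h)..(((k:ℝ)+1)*h), f x * (L*h/2) := by
          apply intervalIntegral.integral_mono_on hlk hi1.abs hi2
          intro x hx
          have hxT : x ∈ Set.Icc (0:ℝ) T := hsub hx
          have hlT : (k:ℝ)*h ∈ Set.Icc (0:ℝ) T := hsub ⟨le_refl _, hlk⟩
          have hrT : ((k:ℝ)+1)*h ∈ Set.Icc (0:ℝ) T := hsub ⟨hlk, le_refl _⟩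
          have hfx : 0 ≤ f x := by
            apply Real.rpow_nonneg
            have h2 := hx.2
            have h3 := hk1N k hk
            linarith
          rw [abs_mul, abs_of_nonneg hfx]
          apply mul_le_mul_of_nonneg_left _ hfx
          have h1 := hLip x hxT ((k:ℝ)*h) hlT
          have h2 := hLip x hxT (((k:ℝ)+1)*h) hrT
          have e1 : |x - (k:ℝ)*h| = x - (k:ℝ)*h := abs_of_nonneg (by linarith [hx.1])
          have e2 : |x - ((k:ℝ)+1)*h| = ((k:ℝ)+1)*h - x := by
            rw [abs_sub_comm]
            exact abs_of_nonneg (by linarith [hx.2])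
          rw [e1] at h1
          rw [e2] at h2
          have hrw : deriv u x - m k
              = ((deriv u x - deriv u ((k:ℝ)*h)) + (deriv u x - deriv u (((k:ℝ)+1)*h))) / 2 := by
            rw [hmdef]; ring
          rw [hrw, abs_div, abs_two]
          have h3 := abs_add_le (deriv u x - deriv u ((k:ℝ)*h)) (deriv u x - deriv u (((k:ℝ)+1)*h))
          have hx1 := hx.1
          have hx2 := hx.2
          nlinarith
      _ = (∫ x in ((k:ℝ)*h)..(((k:ℝ)+1)*h), f x) * (L*h/2) :=
          intervalIntegral.integral_mul_const _ _
  -- value of the full integral of f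
  have hIntf : (∫ x in (0:ℝ)..N, f x) = N ^ (1-a) / (1-a) := by
    rw [hfdef]
    rw [intervalIntegral.integral_comp_sub_left (fun t => t ^ (-a)) N]
    simp only [sub_self, sub_zero]
    rw [integral_rpow (Or.inl (by linarith))]
    rw [Real.zero_rpow (by intro hc; linarith : (-a + 1 : ℝ) ≠ 0)]
    have hne : (-a + 1 : ℝ) = 1 - a := by ring
    rw [hne, sub_zero]
  -- reindex the sum
  have hreindex : (∑ r ∈ Finset.Icc 1 n,
        ((1 / Real.Gamma (1 - a)) * ∫ x in (((r:ℝ)-1)*h)..((r:ℝ)*h), f x) *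
          ((deriv u (((r:ℝ)-1)*h) + deriv u ((r:ℝ)*h)) / 2))
      = ∑ k ∈ Finset.range n,
          ((1 / Real.Gamma (1 - a)) * ∫ x in ((k:ℝ)*h)..(((k:ℝ)+1)*h), f x) * m k := by
    rw [← Finset.Ico_add_one_right_eq_Icc, Finset.sum_Ico_eq_sum_range]
    apply Finset.sum_congr rfl
    intro k _
    have e1 : ((1+k : ℕ):ℝ) - 1 = (k:ℝ) := by push_cast; ring
    have e2 : ((1+k : ℕ):ℝ) = (k:ℝ) + 1 := by push_cast; ring
    rw [e1, e2, hmdef]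
  -- main algebraic identity
  have heq : (1 / Real.Gamma (1 - a)) * (∫ x in (0:ℝ)..N, f x * deriv u x)
      - ∑ k ∈ Finset.range n,
          ((1 / Real.Gamma (1 - a)) * ∫ x in ((k:ℝ)*h)..(((k:ℝ)+1)*h), f x) * m k
    = (1 / Real.Gamma (1 - a)) * ∑ k ∈ Finset.range n,
        ∫ x in ((k:ℝ)*h)..(((k:ℝ)+1)*h), f x * (deriv u x - m k) := by
    rw [hsplit, Finset.mul_sum, Finset.mul_sum, ← Finset.sum_sub_distrib]
    apply Finset.sum_congr rfl
    intro k hk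
    have hk' := Finset.mem_range.mp hk
    have hstep : (∫ x in ((k:ℝ)*h)..(((k:ℝ)+1)*h), f x * (deriv u x - m k))
        = (∫ x in ((k:ℝ)*h)..(((k:ℝ)+1)*h), f x * deriv u x)
          - (∫ x in ((k:ℝ)*h)..(((k:ℝ)+1)*h), f x) * m k := by
      have hfun : (fun x => f x * (deriv u x - m k))
          = fun x => f x * deriv u x - f x * m k := by
        funext x; ring
      rw [hfun, intervalIntegral.integral_sub (hgint k hk') ((hfint _ _).mul_const _),
        intervalIntegral.integral_mul_const]
    rw [hstep]; ring
  -- put it together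
  rw [← hNdef] at *
  rw [hreindex, heq, abs_mul, abs_of_nonneg (by positivity : (0:ℝ) ≤ 1 / Real.Gamma (1 - a))]
  calc (1 / Real.Gamma (1 - a)) *
        |∑ k ∈ Finset.range n, ∫ x in ((k:ℝ)*h)..(((k:ℝ)+1)*h), f x * (deriv u x - m k)|
      ≤ (1 / Real.Gamma (1 - a)) *
        ∑ k ∈ Finset.range n, (∫ x in ((k:ℝ)*h)..(((k:ℝ)+1)*h), f x) * (L*h/2) := by
        apply mul_le_mul_of_nonneg_left _ (by positivity)
        calc |∑ k ∈ Finset.range n, ∫ x in ((k:ℝ)*h)..(((k:ℝ)+1)*h), f x * (deriv u x - m k)|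
            ≤ ∑ k ∈ Finset.range n, |∫ x in ((k:ℝ)*h)..(((k:ℝ)+1)*h), f x * (deriv u x - m k)| :=
              Finset.abs_sum_le_sum_abs _ _
          _ ≤ ∑ k ∈ Finset.range n, (∫ x in ((k:ℝ)*h)..(((k:ℝ)+1)*h), f x) * (L*h/2) :=
              Finset.sum_le_sum (fun k hk => hterm k (Finset.mem_range.mp hk))
    _ = (1 / Real.Gamma (1 - a)) * ((∫ x in (0:ℝ)..N, f x) * (L*h/2)) := by
        rw [← Finset.sum_mul, ← hsplitf]
    _ = L * h / 2 * N ^ (1 - a) / Real.Gamma (2 - a) := by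
        rw [hIntf, hΓ2]
        field_simp
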